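/- The set of affected sources of v admits the explicit characterization S(v) = {s ∈ V : d(s,u) < ∞ and d(s,u) + ω'(u,v) ≤ d(s,v)}. -/

import Mathlib

open scoped BigOperators

/-- A directed graph on vertex set `V` with positive real edge weights. -/
structure WDigraph (V : Type*) where
  /-- the edge relation -/
  E : V → V → Prop
  /-- the edge weights -/
  w : V → V → ℝ
  /-- weights of edges are positive -/
  pos : ∀ a b, E a b → 0 < w a b

namespace WDigraph

variable {V : Type*} [Fintype V] [DecidableEq V]

/-- `p` is a simple path from `s` to `t` in `G`: a nonempty list of pairwise
distinct vertices starting at `s`, ending at `t`, consecutive vertices joined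
by edges. (Since all weights are positive, every shortest path is simple, so
it suffices to consider simple paths throughout.) -/
def IsPath (G : WDigraph V) (s t : V) (p : List V) : Prop :=
  List.Chain' G.E p ∧ p.head? = some s ∧ p.getLast? = some t ∧ p.Nodup

/-- The total weight of a list of vertices (sum of the weights of consecutive pairs). -/
def pw (G : WDigraph V) : List V → ℝ
  | [] => 0
  | [_] => 0
  | a :: b :: r => G.w a b + G.pw (b :: r)

/-- `d(s,t)`: shortest-path distance from `s` to `t`, equal to `⊤` (infinity)
if `t` is unreachable from `s`. -/
noncomputable def dist (G : WDigraph V) (s t : V) : EReal :=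
  sInf ((fun p => (G.pw p : EReal)) '' {p | G.IsPath s t p})

/-- The set of shortest `s`-`t` paths in `G`. -/
def SP (G : WDigraph V) (s t : V) : Set (List V) :=
  {p | G.IsPath s t p ∧ (G.pw p : EReal) = G.dist s t}

/-- `σ_{st}`: the number of shortest `s`-`t` paths in `G`. -/
noncomputable def sigma (G : WDigraph V) (s t : V) : ℕ :=
  (G.SP s t).ncard

/-- `σ_{st}(v)`: the number of shortest `s`-`t` paths in `G` that contain `v`. -/
noncomputable def sigmaV (G : WDigraph V) (s t v : V) : ℕ :=
  {p ∈ G.SP s t | v ∈ p}.ncard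

/-- `σ_{st}(v,w)`: the number of shortest `s`-`t` paths in `G` using the edge `(v,w)`. -/
noncomputable def sigmaE (G : WDigraph V) (s t v w : V) : ℕ :=
  {p ∈ G.SP s t | [v, w] <:+: p}.ncard

/-- `P_s(t)`: the set of predecessors of `t` with respect to source `s`:
nodes `y` with `(y,t) ∈ E` and `d(s,y) + ω(y,t) = d(s,t) < ∞`. -/
def pred (G : WDigraph V) (s t : V) : Set V :=
  {y | G.E y t ∧ G.dist s y + (G.w y t : EReal) = G.dist s t ∧ G.dist s t < ⊤}

/-- `δ_{s•}(v)`: Brandes's one-sided dependency of `s` on `v`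
(a summand is `0` whenever its denominator is `0`, which is automatic since
in Lean division by zero yields zero). -/
noncomputable def delta (G : WDigraph V) (s v : V) : ℝ :=
  ∑ᶠ t ∈ {t : V | t ≠ s ∧ t ≠ v}, (G.sigmaV s t v : ℝ) / (G.sigma s t : ℝ)

/-- `c_B(v)`: the betweenness centrality of `v`. -/
noncomputable def bc (G : WDigraph V) (v : V) : ℝ :=
  ∑ᶠ s ∈ {s : V | s ≠ v}, G.delta s v

/-- `G'` is obtained from `G` by the incremental update `(u, v, ω'(u,v))`:
either a new edge `(u,v) ∉ E` is inserted with positive weight, or the weight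
of the existing edge `(u,v)` is decreased; all other edges and weights are
unchanged. (Positivity of all weights is part of the `WDigraph` structure.) -/
structure IsUpdate (G G' : WDigraph V) (u v : V) : Prop where
  /-- the updated edge is present in `G'` -/
  edge' : G'.E u v
  /-- `E' = E ∪ {(u,v)}` -/
  edge_iff : ∀ a b, G'.E a b ↔ G.E a b ∨ a = u ∧ b = v
  /-- `ω'` agrees with `ω` on all edges other than `(u,v)` -/
  weight_eq : ∀ a b, ¬(a = u ∧ b = v) → G'.w a b = G.w a b
  /-- either an insertion of a new edge, or a weight decrease of an existing one -/
  insert_or_decrease : ¬ G.E u v ∨ (G.E u v ∧ G'.w u v < G.w u v)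

/-- `S(t)`: the affected sources of `t`. -/
def affS (G G' : WDigraph V) (t : V) : Set V :=
  {s | G.dist s t > G'.dist s t ∨ G.sigma s t ≠ G'.sigma s t}

/-- `T(s)`: the affected targets of `s`. -/
def affT (G G' : WDigraph V) (s : V) : Set V :=
  {t | G.dist s t > G'.dist s t ∨ G.sigma s t ≠ G'.sigma s t}

/-- `Δ_{s•}(v) = Σ_{t ∈ T(s), t ≠ v} σ_{st}(v)/σ_{st}`, computed in `G`
(`0`-convention for zero denominators). -/
noncomputable def Delta (G G' : WDigraph V) (s v : V) : ℝ :=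
  ∑ᶠ t ∈ {t : V | t ∈ affT G G' s ∧ t ≠ v}, (G.sigmaV s t v : ℝ) / (G.sigma s t : ℝ)

/-- `Δ'_{s•}(v) = Σ_{t ∈ T(s), t ≠ v} σ'_{st}(v)/σ'_{st}`, computed in `G'`
(`0`-convention for zero denominators). -/
noncomputable def Delta' (G G' : WDigraph V) (s v : V) : ℝ :=
  ∑ᶠ t ∈ {t : V | t ∈ affT G G' s ∧ t ≠ v}, (G'.sigmaV s t v : ℝ) / (G'.sigma s t : ℝ)

end WDigraph

/-! A shortest `s`–`v` path of `G'` that avoids the edge `(u,v)` is a path of `G` of the same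
weight; so `s` is an affected source of `v` exactly when some shortest `s`–`v` path of `G'` uses
`(u,v)`, necessarily as its last edge. Such a path is a `G`-path to `u` followed by `(u,v)`,
whence `d(s,u) + ω'(u,v) ≤ d'(s,v) ≤ d(s,v)`. Conversely, under this inequality a shortest
`G`-path to `u` avoids `v` (as `ω'(u,v) > 0`), and extending it by `(u,v)` gives a shortest
`s`–`v` path of `G'` which is not one of `G`: either it beats `d(s,v)`, or its weight
`d(s,u) + ω'(u,v)` is below its `G`-weight `d(s,u) + ω(u,v)`. -/

lemma List.infix_pair_cons_cons_iff {α : Type*} {a b x y : α} {r : List α} :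
    [x, y] <:+: a :: b :: r ↔ (a = x ∧ b = y) ∨ [x, y] <:+: b :: r := by
  simp [List.infix_cons_iff, List.cons_prefix_cons, eq_comm]

namespace WDigraph

variable {V : Type*}

section Paths

variable {G : WDigraph V}

lemma pw_nonneg : ∀ {p : List V}, p.IsChain G.E → 0 ≤ G.pw p
  | [], _ | [_], _ => le_rfl
  | a :: b :: r, hc => by
    rw [List.isChain_cons_cons] at hc
    exact add_nonneg (G.pos a b hc.1).le (pw_nonneg hc.2)

lemma pw_concat :
    ∀ {q : List V} {a : V}, q.getLast? = some a → ∀ x, G.pw (q ++ [x]) = G.pw q + G.w a x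
  | [], _, hq, _ => by simp at hq
  | [b], a, hq, x => by
    obtain rfl : b = a := by simpa using hq
    simp [pw]
  | b :: c :: r, a, hq, x => by
    rw [List.getLast?_cons_cons] at hq
    have ih := pw_concat hq x
    simp only [List.cons_append, pw] at ih ⊢
    rw [ih]
    ring

lemma pw_le_pw_append :
    ∀ {q r : List V}, q ≠ [] → (q ++ r).IsChain G.E → G.pw q ≤ G.pw (q ++ r)
  | [], _, hq, _ => absurd rfl hq
  | [_], _, _, hc => pw_nonneg hc
  | a :: b :: t, r, _, hc => by
    rw [List.cons_append, List.cons_append, List.isChain_cons_cons] at hc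
    simpa only [List.cons_append, pw, add_le_add_iff_left] using
      pw_le_pw_append (List.cons_ne_nil b t) hc.2

lemma finite_setOf_isPath [Fintype V] (G : WDigraph V) (s t : V) :
    {p | G.IsPath s t p}.Finite :=
  (List.finite_length_le V (Fintype.card V)).subset fun _ hp => hp.2.2.2.length_le_card

lemma finite_SP [Fintype V] (G : WDigraph V) (s t : V) : (G.SP s t).Finite :=
  (G.finite_setOf_isPath s t).subset fun _ hp => hp.1

lemma dist_le_pw {s t : V} {p : List V} (hp : G.IsPath s t p) : G.dist s t ≤ G.pw p :=
  sInf_le ⟨p, hp, rfl⟩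

lemma SP_nonempty [Fintype V] (G : WDigraph V) {s t : V} (h : G.dist s t < ⊤) :
    (G.SP s t).Nonempty := by
  have hne : ((fun p => (G.pw p : EReal)) '' {p | G.IsPath s t p}).Nonempty :=
    Set.nonempty_iff_ne_empty.mpr fun he => by simp [dist, he] at h
  obtain ⟨p, hp, hpe⟩ := hne.csInf_mem ((G.finite_setOf_isPath s t).image _)
  exact ⟨p, hp, hpe⟩

lemma IsPath.append_left {s t a : V} {p r : List V} (hp : G.IsPath s t (p ++ r))
    (ha : p.getLast? = some a) : G.IsPath s a p := by
  have hne : p ≠ [] := by rintro rfl; simp at ha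
  refine ⟨hp.1.left_of_append, ?_, ha, hp.2.2.2.of_append_left⟩
  rw [← hp.2.1, List.head?_append, Option.or_of_isSome (by simpa using hne)]

lemma dist_le_pw_of_mem {s t x : V} {p : List V} (hp : G.IsPath s t p) (hx : x ∈ p) :
    G.dist s x ≤ G.pw p := by
  obtain ⟨p₁, p₂, rfl⟩ := List.append_of_mem hx
  have hsplit : p₁ ++ x :: p₂ = (p₁ ++ [x]) ++ p₂ := by simp
  rw [hsplit] at hp ⊢
  calc G.dist s x ≤ G.pw (p₁ ++ [x]) := dist_le_pw (hp.append_left List.getLast?_concat)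
    _ ≤ G.pw (p₁ ++ [x] ++ p₂) := by exact_mod_cast pw_le_pw_append (by simp) hp.1

lemma IsPath.concat {s a x : V} {q : List V} (hq : G.IsPath s a q) (hax : G.E a x)
    (hx : x ∉ q) : G.IsPath s x (q ++ [x]) := by
  have hne : q ≠ [] := by rintro rfl; simp [IsPath] at hq
  refine ⟨List.isChain_append.mpr ⟨hq.1, List.isChain_singleton x, ?_⟩, ?_,
    List.getLast?_concat, ?_⟩
  · simp only [hq.2.2.1, Option.mem_def, Option.some.injEq, List.head?_cons]
    rintro _ rfl _ rfl
    exact hax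
  · rw [← hq.2.1, List.head?_append, Option.or_of_isSome (by simpa using hne)]
  · simpa [← List.concat_eq_append, List.nodup_concat] using ⟨hx, hq.2.2.2⟩

end Paths

section Update

variable {G G' : WDigraph V} {u v : V}

lemma IsUpdate.w_le (h : IsUpdate G G' u v) {a b : V} (hab : G.E a b) :
    G'.w a b ≤ G.w a b := by
  by_cases huv : a = u ∧ b = v
  · obtain ⟨rfl, rfl⟩ := huv
    exact (h.insert_or_decrease.resolve_left (not_not.mpr hab)).2.le
  · exact (h.weight_eq a b huv).le

lemma IsUpdate.w_lt (h : IsUpdate G G' u v) (huv : G.E u v) : G'.w u v < G.w u v :=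
  (h.insert_or_decrease.resolve_left (not_not.mpr huv)).2

lemma IsUpdate.isChain (h : IsUpdate G G' u v) {p : List V} (hp : p.IsChain G.E) :
    p.IsChain G'.E :=
  hp.imp fun a b hab => (h.edge_iff a b).mpr (Or.inl hab)

lemma IsUpdate.isChain_of_not_infix (h : IsUpdate G G' u v) :
    ∀ {p : List V}, p.IsChain G'.E → ¬ [u, v] <:+: p → p.IsChain G.E
  | [], _, _ => List.isChain_nil
  | [a], _, _ => List.isChain_singleton a
  | a :: b :: r, hc, hn => by
    rw [List.isChain_cons_cons] at hc ⊢
    rw [List.infix_pair_cons_cons_iff, not_or] at hn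
    exact ⟨((h.edge_iff a b).mp hc.1).resolve_right hn.1,
      h.isChain_of_not_infix hc.2 hn.2⟩

lemma IsUpdate.pw_eq_of_not_infix (h : IsUpdate G G' u v) :
    ∀ {p : List V}, ¬ [u, v] <:+: p → G'.pw p = G.pw p
  | [], _ | [_], _ => rfl
  | a :: b :: r, hn => by
    rw [List.infix_pair_cons_cons_iff, not_or] at hn
    simp only [pw, h.weight_eq a b hn.1, h.pw_eq_of_not_infix hn.2]

lemma IsUpdate.pw_le (h : IsUpdate G G' u v) :
    ∀ {p : List V}, p.IsChain G.E → G'.pw p ≤ G.pw p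
  | [], _ | [_], _ => le_rfl
  | a :: b :: r, hc => by
    rw [List.isChain_cons_cons] at hc
    exact add_le_add (h.w_le hc.1) (h.pw_le hc.2)

lemma IsUpdate.pw_lt_of_infix (h : IsUpdate G G' u v) :
    ∀ {p : List V}, p.IsChain G.E → [u, v] <:+: p → G'.pw p < G.pw p
  | [], _, hi | [_], _, hi => absurd hi.length_le (by simp)
  | a :: b :: r, hc, hi => by
    rw [List.isChain_cons_cons] at hc
    simp only [pw]
    rcases List.infix_pair_cons_cons_iff.mp hi with ⟨rfl, rfl⟩ | hi
    · exact add_lt_add_of_lt_of_le (h.w_lt hc.1) (h.pw_le hc.2)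
    · exact add_lt_add_of_le_of_lt (h.w_le hc.1) (h.pw_lt_of_infix hc.2 hi)

lemma IsUpdate.isPath (h : IsUpdate G G' u v) {s t : V} {p : List V} (hp : G.IsPath s t p) :
    G'.IsPath s t p :=
  ⟨h.isChain hp.1, hp.2⟩

lemma IsUpdate.isPath_of_not_infix (h : IsUpdate G G' u v) {s t : V} {p : List V}
    (hp : G'.IsPath s t p) (hn : ¬ [u, v] <:+: p) : G.IsPath s t p :=
  ⟨h.isChain_of_not_infix hp.1 hn, hp.2⟩

lemma IsUpdate.dist_le (h : IsUpdate G G' u v) (s t : V) : G'.dist s t ≤ G.dist s t :=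
  le_sInf <| by
    rintro _ ⟨p, hp, rfl⟩
    exact (dist_le_pw (h.isPath hp)).trans (EReal.coe_le_coe (h.pw_le hp.1))

lemma IsUpdate.SP_subset (h : IsUpdate G G' u v) {s t : V}
    (hd : G'.dist s t = G.dist s t) : G.SP s t ⊆ G'.SP s t := by
  rintro p ⟨hp, hpw⟩
  refine ⟨h.isPath hp, le_antisymm ?_ (dist_le_pw (h.isPath hp))⟩
  calc (G'.pw p : EReal) ≤ G.pw p := by exact_mod_cast h.pw_le hp.1
    _ = G'.dist s t := hpw.trans hd.symm

lemma IsUpdate.mem_SP_of_not_infix (h : IsUpdate G G' u v) {s t : V} {p : List V}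
    (hp : p ∈ G'.SP s t) (hn : ¬ [u, v] <:+: p) :
    p ∈ G.SP s t ∧ G'.dist s t = G.dist s t := by
  have hpG := h.isPath_of_not_infix hp.1 hn
  have hpw : (G.pw p : EReal) = G'.dist s t := by rw [← h.pw_eq_of_not_infix hn, hp.2]
  have hd : G'.dist s t = G.dist s t :=
    le_antisymm (h.dist_le s t) (hpw ▸ dist_le_pw hpG)
  exact ⟨⟨hpG, hpw.trans hd⟩, hd⟩

lemma IsUpdate.mem_affS_iff [Fintype V] (h : IsUpdate G G' u v) {s t : V} :
    s ∈ affS G G' t ↔ ∃ p ∈ G'.SP s t, [u, v] <:+: p := by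
  simp only [affS, Set.mem_ofPred_eq, gt_iff_lt]
  constructor
  · contrapose!
    intro hn
    have hd : G'.dist s t = G.dist s t := by
      rcases eq_top_or_lt_top (G'.dist s t) with htop | hfin
      · exact le_antisymm (h.dist_le s t) (htop ▸ le_top)
      · obtain ⟨p, hp⟩ := G'.SP_nonempty hfin
        exact (h.mem_SP_of_not_infix hp (hn p hp)).2
    refine ⟨hd.ge, congrArg Set.ncard (le_antisymm (h.SP_subset hd) fun p hp => ?_)⟩
    exact (h.mem_SP_of_not_infix hp (hn p hp)).1
  · rintro ⟨p, hp, hi⟩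
    rcases (h.dist_le s t).lt_or_eq with hlt | hd
    · exact Or.inl hlt
    refine Or.inr (Set.ncard_lt_ncard ⟨h.SP_subset hd, fun hsub => ?_⟩ (G'.finite_SP s t)).ne
    obtain ⟨hpG, hpw⟩ := hsub hp
    have hlt := h.pw_lt_of_infix hpG.1 hi
    rw [← EReal.coe_lt_coe_iff, hpw, hp.2, hd] at hlt
    exact lt_irrefl _ hlt


lemma IsUpdate.exists_isPath_of_infix (h : IsUpdate G G' u v) {s : V} {p : List V}
    (hp : G'.IsPath s v p) (hi : [u, v] <:+: p) :
    ∃ q, G.IsPath s u q ∧ G'.pw p = G.pw q + G'.w u v := by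
  obtain ⟨q, r, rfl⟩ := hi
  have hr : r = [] := by
    rcases List.eq_nil_or_concat' r with hr | ⟨r', x, rfl⟩
    · exact hr
    · have hl := hp.2.2.1
      rw [← List.append_assoc, List.getLast?_concat, Option.some_inj] at hl
      have hn := hp.2.2.2
      simp [hl, List.nodup_append] at hn
  subst hr
  have hsplit : q ++ [u, v] ++ [] = (q ++ [u]) ++ [v] := by simp
  rw [hsplit] at hp ⊢
  have hn : ¬ [u, v] <:+: q ++ [u] := fun hi =>
    (List.nodup_append.mp hp.2.2.2).2.2 v (hi.subset (by simp)) v (by simp) rfl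
  refine ⟨q ++ [u], h.isPath_of_not_infix (hp.append_left List.getLast?_concat) hn, ?_⟩
  rw [pw_concat List.getLast?_concat, h.pw_eq_of_not_infix hn]

lemma IsUpdate.dist_add_le_pw_of_infix (h : IsUpdate G G' u v) {s : V} {p : List V}
    (hp : G'.IsPath s v p) (hi : [u, v] <:+: p) :
    G.dist s u < ⊤ ∧ G.dist s u + G'.w u v ≤ G'.pw p := by
  obtain ⟨q, hq, hpw⟩ := h.exists_isPath_of_infix hp hi
  refine ⟨(dist_le_pw hq).trans_lt (EReal.coe_lt_top _), ?_⟩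
  rw [hpw, EReal.coe_add]
  exact add_le_add_left (dist_le_pw hq) _

lemma IsUpdate.min_le_dist (h : IsUpdate G G' u v) (s : V) :
    min (G.dist s v) (G.dist s u + G'.w u v) ≤ G'.dist s v :=
  le_sInf <| by
    rintro _ ⟨p, hp, rfl⟩
    by_cases hi : [u, v] <:+: p
    · exact min_le_of_right_le (h.dist_add_le_pw_of_infix hp hi).2
    · exact min_le_of_left_le <| (dist_le_pw (h.isPath_of_not_infix hp hi)).trans_eq
        (congrArg _ (h.pw_eq_of_not_infix hi).symm)

lemma IsUpdate.exists_SP_infix_of_dist_add_le [Fintype V] (h : IsUpdate G G' u v) {s : V}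
    (hfin : G.dist s u < ⊤) (hle : G.dist s u + G'.w u v ≤ G.dist s v) :
    ∃ p ∈ G'.SP s v, [u, v] <:+: p := by
  obtain ⟨q, hq, hqw⟩ := G.SP_nonempty hfin
  have hv : v ∉ q := fun hv => by
    have hloop : ((G.pw q + G'.w u v : ℝ) : EReal) ≤ G.pw q := by
      rw [EReal.coe_add, hqw]
      exact hle.trans ((dist_le_pw_of_mem hq hv).trans_eq hqw)
    linarith [EReal.coe_le_coe_iff.mp hloop, G'.pos u v h.edge']
  have hn : ¬ [u, v] <:+: q := fun hi => hv (hi.subset (by simp))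
  have hpath := (h.isPath hq).concat h.edge' hv
  have hpw : (G'.pw (q ++ [v]) : EReal) = G.dist s u + G'.w u v := by
    rw [pw_concat hq.2.2.1, h.pw_eq_of_not_infix hn, EReal.coe_add, hqw]
  refine ⟨q ++ [v], ⟨hpath, le_antisymm ?_ (dist_le_pw hpath)⟩, ?_⟩
  · rw [hpw, ← min_eq_right hle]
    exact h.min_le_dist s
  · obtain ⟨q', rfl⟩ := List.getLast?_eq_some_iff.mp hq.2.2.1
    exact ⟨q', [], by simp⟩

end Update

variable [Fintype V] [DecidableEq V]

/-- The set of affected sources of `v` has the explicit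
characterization `S(v) = {s ∈ V : d(s,u) < ∞ ∧ d(s,u) + ω'(u,v) ≤ d(s,v)}`. -/
theorem affS_v_eq (G G' : WDigraph V) (u v : V) (h : IsUpdate G G' u v) :
    affS G G' v =
      {s : V | G.dist s u < ⊤ ∧ G.dist s u + (G'.w u v : EReal) ≤ G.dist s v} := by
  ext s
  rw [h.mem_affS_iff, Set.mem_ofPred_eq]
  constructor
  · rintro ⟨p, hp, hi⟩
    obtain ⟨hfin, hle⟩ := h.dist_add_le_pw_of_infix hp.1 hi
    exact ⟨hfin, (hle.trans_eq hp.2).trans (h.dist_le s v)⟩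
  · rintro ⟨hfin, hle⟩
    exact h.exists_SP_infix_of_dist_add_le hfin hle

end WDigraph
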